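/- If E ⊆ ℝ^m ⊗ ℝ^n is an ellipsoid satisfying B₂^m ⊗_π B₂^n ⊆ E ⊆ B₂^m ⊗_ε B₂^n, then E = B₂^{m,n}, the Hilbert–Schmidt unit ball. -/

import Mathlib

/-!
Write `E = T(B)` with `T` linear. A matrix unit `u = eₖ ⊗ eₗ` lies in the projective ball, so
`u = T x` with `‖x‖ ≤ 1`; and `E ⊆ B₂ ⊗_ε B₂` says `⟪u, T y⟫ ≤ 1` for `‖y‖ ≤ 1`, i.e. `‖T* u‖ ≤ 1`.
As `⟪T* u, x⟫ = ‖u‖² = 1`, equality in Cauchy–Schwarz forces `T* u = x`, so `T T* u = u`.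
Thus `T T* = 1` on an orthonormal basis, `T` is orthogonal and `E = B`.
-/

open Set

/-- Outer product of two vectors, as an `m × n` matrix. -/
def outer {m n : ℕ} (x : Fin m → ℝ) (y : Fin n → ℝ) : Matrix (Fin m) (Fin n) ℝ :=
  fun i j => x i * y j

/-- Hilbert–Schmidt (Frobenius) inner product on matrices. -/
def hsInner {m n : ℕ} (A B : Matrix (Fin m) (Fin n) ℝ) : ℝ := ∑ i, ∑ j, A i j * B i j

/-- Polar of a set of matrices w.r.t. the Hilbert–Schmidt inner product. -/
def polar {m n : ℕ} (C : Set (Matrix (Fin m) (Fin n) ℝ)) : Set (Matrix (Fin m) (Fin n) ℝ) :=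
  {z | ∀ u ∈ C, |hsInner u z| ≤ 1}

/-- Polar of a set of vectors w.r.t. the standard inner product. -/
def polarVec {d : ℕ} (C : Set (Fin d → ℝ)) : Set (Fin d → ℝ) :=
  {z | ∀ u ∈ C, |∑ i, u i * z i| ≤ 1}

/-- A 0-symmetric convex body: compact, convex, nonempty interior, symmetric. -/
def IsSymCB {E : Type*} [AddCommGroup E] [Module ℝ E] [TopologicalSpace E] (Q : Set E) : Prop :=
  IsCompact Q ∧ Convex ℝ Q ∧ (interior Q).Nonempty ∧ Q = -Q

/-- Projective tensor product of convex bodies. -/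
def projTP {m n : ℕ} (Q₁ : Set (Fin m → ℝ)) (Q₂ : Set (Fin n → ℝ)) :
    Set (Matrix (Fin m) (Fin n) ℝ) :=
  convexHull ℝ {M | ∃ x ∈ Q₁, ∃ y ∈ Q₂, M = outer x y}

/-- Injective tensor product of convex bodies. -/
def injTP {m n : ℕ} (Q₁ : Set (Fin m → ℝ)) (Q₂ : Set (Fin n → ℝ)) :
    Set (Matrix (Fin m) (Fin n) ℝ) :=
  polar (projTP (polarVec Q₁) (polarVec Q₂))

/-- A linear map on the matrix space, given by a big matrix indexed by pairs. -/
def act {m n : ℕ} (T : Matrix (Fin m × Fin n) (Fin m × Fin n) ℝ)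
    (A : Matrix (Fin m) (Fin n) ℝ) : Matrix (Fin m) (Fin n) ℝ :=
  fun i j => ∑ q, T (i, j) q * A q.1 q.2

/-- The Hilbert–Schmidt unit ball of matrices. -/
def hsBall (m n : ℕ) : Set (Matrix (Fin m) (Fin n) ℝ) := {A | hsInner A A ≤ 1}

/-- The Euclidean unit ball in ℝ^d. -/
def euclBall (d : ℕ) : Set (Fin d → ℝ) := {x | ∑ i, x i ^ 2 ≤ 1}

open Metric Matrix
open LinearMap (adjoint adjoint_inner_left adjoint_inner_right)

open scoped RealInnerProductSpace

section

variable {V : Type*} [NormedAddCommGroup V] [InnerProductSpace ℝ V]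

theorem norm_le_one_of_forall_inner_le_one {a : V} (h : ∀ x : V, ‖x‖ ≤ 1 → ⟪x, a⟫ ≤ 1) :
    ‖a‖ ≤ 1 := by
  rcases eq_or_ne a 0 with rfl | ha
  · simp
  calc ‖a‖ = ⟪‖a‖⁻¹ • a, a⟫ := by
        rw [real_inner_smul_left, real_inner_self_eq_norm_sq]
        field_simp [norm_ne_zero_iff.mpr ha]
    _ ≤ 1 := h _ (norm_smul_inv_norm ha).le

theorem eq_of_norm_le_one_of_inner_eq_one {a b : V} (ha : ‖a‖ ≤ 1) (hb : ‖b‖ ≤ 1)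
    (hab : ⟪a, b⟫ = 1) : a = b := by
  have h : ‖a - b‖ ^ 2 ≤ 0 := by
    rw [norm_sub_sq_real, hab]
    nlinarith [norm_nonneg a, norm_nonneg b]
  simpa [sub_eq_zero] using le_antisymm h (sq_nonneg _)

variable [FiniteDimensional ℝ V]

theorem apply_adjoint_apply_eq_of_mem_image_closedBall (T : V →ₗ[ℝ] V) {u : V} (hu : ‖u‖ = 1)
    (hmem : u ∈ T '' closedBall 0 1) (hpolar : ∀ z ∈ T '' closedBall 0 1, ⟪u, z⟫ ≤ 1) :
    T (adjoint T u) = u := by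
  obtain ⟨x, hx, rfl⟩ := hmem
  rw [mem_closedBall_zero_iff] at hx
  suffices adjoint T (T x) = x by rw [this]
  refine eq_of_norm_le_one_of_inner_eq_one (norm_le_one_of_forall_inner_le_one fun y hy => ?_) hx ?_
  · rw [adjoint_inner_right, real_inner_comm]
    exact hpolar _ ⟨y, mem_closedBall_zero_iff.mpr hy, rfl⟩
  · rw [adjoint_inner_left, real_inner_self_eq_norm_sq, hu, one_pow]

theorem image_closedBall_eq_of_comp_adjoint_eq_one {T : V →ₗ[ℝ] V} (h : T ∘ₗ adjoint T = 1) :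
    T '' closedBall 0 1 = closedBall 0 1 := by
  have h' : adjoint T ∘ₗ T = 1 := mul_eq_one_comm.mp h
  let e : V ≃ₗᵢ[ℝ] V := (LinearEquiv.ofLinearMap T (adjoint T) h h').isometryOfInner fun x y => by
    rw [LinearEquiv.coe_ofLinearMap, ← adjoint_inner_right, ← LinearMap.comp_apply, h',
      Module.End.one_apply]
  have := e.image_closedBall 0 1
  rwa [map_zero] at this

theorem image_closedBall_eq_closedBall_of_orthonormalBasis {ι : Type*} [Fintype ι]
    (b : OrthonormalBasis ι ℝ V) (T : V →ₗ[ℝ] V) (hmem : ∀ i, b i ∈ T '' closedBall 0 1)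
    (hpolar : ∀ i, ∀ z ∈ T '' closedBall 0 1, ⟪b i, z⟫ ≤ 1) :
    T '' closedBall 0 1 = closedBall 0 1 :=
  image_closedBall_eq_of_comp_adjoint_eq_one <| b.toBasis.ext fun i => by
    simpa using
      apply_adjoint_apply_eq_of_mem_image_closedBall T (b.orthonormal.1 i) (hmem i) (hpolar i)

end

def hsEquiv (m n : ℕ) : Matrix (Fin m) (Fin n) ℝ ≃ₗ[ℝ] EuclideanSpace ℝ (Fin m × Fin n) :=
  (LinearEquiv.curry ℝ ℝ (Fin m) (Fin n)).symm ≪≫ₗ (WithLp.linearEquiv 2 ℝ _).symm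

section
variable {m n : ℕ}

theorem hsEquiv_apply (A : Matrix (Fin m) (Fin n) ℝ) (p : Fin m × Fin n) :
    hsEquiv m n A p = A p.1 p.2 := rfl

theorem hsInner_eq_inner (A B : Matrix (Fin m) (Fin n) ℝ) :
    hsInner A B = ⟪hsEquiv m n A, hsEquiv m n B⟫ := by
  simp [hsInner, PiLp.inner_apply, hsEquiv_apply, Fintype.sum_prod_type, mul_comm]

theorem hsBall_eq_preimage : hsBall m n = hsEquiv m n ⁻¹' closedBall 0 1 := by
  ext A
  simp [hsBall, hsInner_eq_inner]

theorem hsEquiv_act (T : Matrix (Fin m × Fin n) (Fin m × Fin n) ℝ) (A : Matrix (Fin m) (Fin n) ℝ) :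
    hsEquiv m n (act T A) = toEuclideanLin T (hsEquiv m n A) := by
  ext p
  simp [act, hsEquiv_apply, mulVec, dotProduct]

theorem hsEquiv_image_act_hsBall (T : Matrix (Fin m × Fin n) (Fin m × Fin n) ℝ) :
    hsEquiv m n '' (act T '' hsBall m n) = toEuclideanLin T '' closedBall 0 1 := by
  have hcomm : hsEquiv m n ∘ act T = toEuclideanLin T ∘ hsEquiv m n := funext (hsEquiv_act T)
  rw [← image_comp, hcomm, hsBall_eq_preimage, image_comp,
    image_preimage_eq _ (hsEquiv m n).surjective]

theorem hsEquiv_outer_single (k : Fin m) (l : Fin n) :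
    hsEquiv m n (outer (Pi.single k 1) (Pi.single l 1)) = EuclideanSpace.basisFun _ ℝ (k, l) := by
  ext ⟨i, j⟩
  simp only [hsEquiv_apply, outer, EuclideanSpace.basisFun_apply, PiLp.single_apply,
    Pi.single_apply, Prod.mk.injEq]
  split_ifs <;> simp_all

theorem outer_single_mem_projTP (k : Fin m) (l : Fin n) :
    outer (Pi.single k 1) (Pi.single l 1) ∈ projTP (euclBall m) (euclBall n) :=
  subset_convexHull ℝ _ ⟨_, by simp [euclBall, Pi.single_apply, ite_pow],
    _, by simp [euclBall, Pi.single_apply, ite_pow], rfl⟩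

end

theorem ellipsoid_between_is_hs_ball (m n : ℕ)
    (E : Set (Matrix (Fin m) (Fin n) ℝ))
    (hell : ∃ T : Matrix (Fin m × Fin n) (Fin m × Fin n) ℝ, IsUnit T ∧ E = act T '' hsBall m n)
    (hπ : projTP (euclBall m) (euclBall n) ⊆ E)
    (hε : E ⊆ polar (projTP (euclBall m) (euclBall n))) :
    E = hsBall m n := by
  obtain ⟨T, -, rfl⟩ := hell
  have hmem : ∀ p, EuclideanSpace.basisFun _ ℝ p ∈ toEuclideanLin T '' closedBall 0 1 := by
    rintro ⟨k, l⟩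
    rw [← hsEquiv_image_act_hsBall, ← hsEquiv_outer_single]
    exact mem_image_of_mem _ (hπ (outer_single_mem_projTP k l))
  have hpolar : ∀ p, ∀ z ∈ toEuclideanLin T '' closedBall 0 1,
      ⟪EuclideanSpace.basisFun _ ℝ p, z⟫ ≤ 1 := by
    rintro ⟨k, l⟩ z hz
    rw [← hsEquiv_image_act_hsBall] at hz
    obtain ⟨A, hA, rfl⟩ := hz
    rw [← hsEquiv_outer_single, ← hsInner_eq_inner]
    exact (le_abs_self _).trans (hε hA _ (outer_single_mem_projTP k l))
  have hball := image_closedBall_eq_closedBall_of_orthonormalBasis _ _ hmem hpolar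
  rw [← hsEquiv_image_act_hsBall] at hball
  rw [← preimage_image_eq (act T '' hsBall m n) (hsEquiv m n).injective, hball, hsBall_eq_preimage]
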